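/- arXiv:math-ph/0203001 — 4 statements merged into one kernel-verified Lean document; each statement's English description precedes it below -/
import Mathlib

section
/- Let P : Fin 4 → Fin 4 → Matrix (Fin 2) (Fin 2) ℂ be a family of 2×2 complex matrices P_{μα} (μ, α ∈ {0,1,2,3}). Suppose that for every λ = (λ₁,λ₂,λ₃) ∈ ℝ³ and all μ, ν ∈ {0,1,2,3}, the matrices P_{μ0} + λ₁P_{μ1} + λ₂P_{μ2} + λ₃P_{μ3} and P_{ν0} + λ₁P_{ν1} + λ₂P_{ν2} + λ₃P_{ν3} commute. Then for all μ, ν, α, β ∈ {0,1,2,3} one has [P_{μα}, P_{νβ}] + [P_{μβ}, P_{να}] = 0; in particular, taking α = β, [P_{μα}, P_{να}] = 0. -/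
/-!
For fixed `μ, ν`, the map `λ ↦ [∑ λ_α P_{μα}, ∑ λ_α P_{να}]` on `λ = (λ₀, …, λ₃) ∈ ℝ⁴` is a
quadratic map whose polarization at `(e_α, e_β)` is `[P_{μα}, P_{νβ}] + [P_{μβ}, P_{να}]`. The
hypothesis says that it vanishes on the affine hyperplane `λ₀ = 1`. By homogeneity it then vanishes
off the hyperplane `λ₀ = 0`, and by the parallelogram law on that hyperplane too, so it is zero,
and so is its polarization.
-/

namespace QuadraticMap

variable {K V N : Type*} [Field K] [NeZero (2 : K)] [AddCommGroup V] [Module K V]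
  [AddCommGroup N] [Module K N]

theorem eq_zero_of_forall_apply_eq_one (Q : QuadraticMap K V N) (φ : Module.Dual K V) {v : V}
    (hv : φ v = 1) (hQ : ∀ x, φ x = 1 → Q x = 0) : Q = 0 := by
  ext x
  by_cases hx : φ x = 0
  · -- `v ± x` lie on the hyperplane, and `Q (v + x) + Q (v - x) = 2 • (Q v + Q x)`.
    have hpolar := polar_neg_right Q v x
    simp only [polar, sub_eq_add_neg, QuadraticMap.map_neg] at hpolar
    rw [hQ v hv, hQ (v + x) (by simp [hv, hx]), hQ (v + -x) (by simp [hv, hx])] at hpolar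
    have h2 : (2 : K) • Q x = 0 := by
      rw [two_smul]
      linear_combination (norm := module) -hpolar
    exact (smul_eq_zero.mp h2).resolve_left two_ne_zero
  · have hscale : x = φ x • ((φ x)⁻¹ • x) := by rw [smul_smul, mul_inv_cancel₀ hx, one_smul]
    rw [hscale, QuadraticMap.map_smul, hQ _ (by simp [hx]), smul_zero, zero_apply]

end QuadraticMap

section Pencil

variable (K : Type*) {A ι : Type*} [Field K] [Ring A] [Algebra K A] [Fintype ι]

def commutatorPencil (P P' : ι → A) : (ι → K) →ₗ[K] (ι → K) →ₗ[K] A :=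
  (LinearMap.mul K A - (LinearMap.mul K A).flip).compl₁₂
    (Fintype.linearCombination K P) (Fintype.linearCombination K P')

theorem commutatorPencil_apply (P P' : ι → A) (x y : ι → K) :
    commutatorPencil K P P' x y =
      (∑ i, x i • P i) * (∑ i, y i • P' i) - (∑ i, y i • P' i) * (∑ i, x i • P i) := by
  simp only [commutatorPencil, LinearMap.compl₁₂_apply, LinearMap.sub_apply, LinearMap.mul_apply',
    LinearMap.flip_apply, Fintype.linearCombination_apply]

theorem commutatorPencil_single [DecidableEq ι] (P P' : ι → A) (α β : ι) :
    commutatorPencil K P P' (Pi.single α 1) (Pi.single β 1) = P α * P' β - P' β * P α := by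
  simp [commutatorPencil]

variable {K} in
theorem commutator_add_commutator_eq_zero_of_forall_commute [NeZero (2 : K)] (P P' : ι → A)
    (i₀ : ι)
    (h : ∀ x : ι → K, x i₀ = 1 → Commute (∑ i, x i • P i) (∑ i, x i • P' i)) (α β : ι) :
    (P α * P' β - P' β * P α) + (P β * P' α - P' α * P β) = 0 := by
  classical
  have hQ : LinearMap.BilinMap.toQuadraticMap (commutatorPencil K P P') = 0 :=
    QuadraticMap.eq_zero_of_forall_apply_eq_one _ (LinearMap.proj i₀) (v := Pi.single i₀ 1)
      (by simp) fun x hx => by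
        simp [LinearMap.BilinMap.toQuadraticMap_apply, commutatorPencil_apply, (h x hx).eq]
  have hpolar := LinearMap.BilinMap.polar_toQuadraticMap (B := commutatorPencil K P P')
    (Pi.single α 1) (Pi.single β 1)
  rw [hQ, commutatorPencil_single, commutatorPencil_single] at hpolar
  simpa [QuadraticMap.polar] using hpolar.symm

end Pencil

/-- Splitting with respect to the separation constants λ of the
commutativity conditions for the coefficient matrices `P μ α` of the reduced
separation equations of the Pauli equation. -/
theorem splitting_of_commutativity
    (P : Fin 4 → Fin 4 → Matrix (Fin 2) (Fin 2) ℂ)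
    (h : ∀ (l1 l2 l3 : ℝ) (μ ν : Fin 4),
      Commute
        (P μ 0 + (l1 : ℂ) • P μ 1 + (l2 : ℂ) • P μ 2 + (l3 : ℂ) • P μ 3)
        (P ν 0 + (l1 : ℂ) • P ν 1 + (l2 : ℂ) • P ν 2 + (l3 : ℂ) • P ν 3)) :
    (∀ μ ν α β : Fin 4,
      (P μ α * P ν β - P ν β * P μ α) + (P μ β * P ν α - P ν α * P μ β) = 0)
    ∧ (∀ μ ν α : Fin 4, P μ α * P ν α - P ν α * P μ α = 0) := by
  have split : ∀ μ ν α β : Fin 4,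
      (P μ α * P ν β - P ν β * P μ α) + (P μ β * P ν α - P ν α * P μ β) = 0 := by
    intro μ ν
    refine commutator_add_commutator_eq_zero_of_forall_commute (K := ℝ) _ _ 0 fun x hx => ?_
    simpa [Fin.sum_univ_four, hx, Complex.coe_smul] using h (x 1) (x 2) (x 3) μ ν
  refine ⟨split, fun μ ν α => ?_⟩
  have h2 : (2 : ℝ) • (P μ α * P ν α - P ν α * P μ α) = 0 := by
    rw [two_smul]; exact split μ ν α α
  exact (smul_eq_zero.mp h2).resolve_left two_ne_zero
end

section
/- Let ι be a type and let P : ι → Matrix (Fin 2) (Fin 2) ℂ be a family of Hermitian 2×2 matrices that pairwise commute: P i · P j = P j · P i for all i, j ∈ ι. Then there exist a vector s ∈ ℝ³ and real-valued functions F, G : ι → ℝ such that P i = F(i)·I + G(i)·(s·σ) for all i ∈ ι, where I is the 2×2 identity matrix. -/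
open Matrix

/-- The first Pauli matrix. -/
noncomputable def sigma1 : Matrix (Fin 2) (Fin 2) ℂ := !![0, 1; 1, 0]

/-- The second Pauli matrix. -/
noncomputable def sigma2 : Matrix (Fin 2) (Fin 2) ℂ := !![0, -Complex.I; Complex.I, 0]

/-- The third Pauli matrix. -/
noncomputable def sigma3 : Matrix (Fin 2) (Fin 2) ℂ := !![1, 0; 0, -1]

/-- For `s ∈ ℝ³`, `s·σ = s₁σ₁ + s₂σ₂ + s₃σ₃`. -/
noncomputable def pauliDot (s : Fin 3 → ℝ) : Matrix (Fin 2) (Fin 2) ℂ :=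
  (s 0 : ℂ) • sigma1 + (s 1 : ℂ) • sigma2 + (s 2 : ℂ) • sigma3

lemma pauliDot_eq (v : Fin 3 → ℝ) :
    pauliDot v = !![(v 2 : ℂ), (v 0 : ℂ) - Complex.I * v 1;
                    (v 0 : ℂ) + Complex.I * v 1, -(v 2 : ℂ)] := by
  unfold pauliDot sigma1 sigma2 sigma3
  ext i j
  fin_cases i <;> fin_cases j <;> simp <;> ring

lemma pauliDot_smul (c : ℝ) (v : Fin 3 → ℝ) :
    pauliDot (c • v) = (c : ℂ) • pauliDot v := by
  rw [pauliDot_eq, pauliDot_eq]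
  ext i j
  fin_cases i <;> fin_cases j <;> simp <;> push_cast <;> ring

lemma herm_decomp (M : Matrix (Fin 2) (Fin 2) ℂ) (h : Mᴴ = M) :
    M = ((((M 0 0).re + (M 1 1).re)/2 : ℝ) : ℂ) • (1 : Matrix (Fin 2) (Fin 2) ℂ) +
      pauliDot ![(M 1 0).re, (M 1 0).im, ((M 0 0).re - (M 1 1).re)/2] := by
  have h00 : (M 0 0).im = 0 := by
    have := congrFun (congrFun h 0) 0
    simp [conjTranspose_apply, Complex.ext_iff] at this
    linarith [this]
  have h11 : (M 1 1).im = 0 := by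
    have := congrFun (congrFun h 1) 1
    simp [conjTranspose_apply, Complex.ext_iff] at this
    linarith [this]
  have h01 : M 0 1 = (starRingEnd ℂ) (M 1 0) := by
    have := congrFun (congrFun h 0) 1
    simpa [conjTranspose_apply] using this.symm
  rw [pauliDot_eq]
  ext i j
  fin_cases i <;> fin_cases j <;>
    simp [h01, Complex.ext_iff, Complex.conj_re, Complex.conj_im] <;>
    constructor <;> (try push_cast) <;> first | ring1 | linarith [h00, h11]

lemma comm_cross (v w : Fin 3 → ℝ)
    (h : pauliDot v * pauliDot w = pauliDot w * pauliDot v) :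
    v 0 * w 1 = v 1 * w 0 ∧ v 0 * w 2 = v 2 * w 0 ∧ v 1 * w 2 = v 2 * w 1 := by
  rw [pauliDot_eq v, pauliDot_eq w] at h
  have h00 := congrFun (congrFun h 0) 0
  have h01 := congrFun (congrFun h 0) 1
  simp [Matrix.mul_apply, Fin.sum_univ_two, Complex.ext_iff] at h00 h01
  refine ⟨?_, ?_, ?_⟩ <;> nlinarith [h00, h01.1, h01.2]

lemma parallel_of_cross (s v : Fin 3 → ℝ) (hs : s ≠ 0)
    (h1 : s 0 * v 1 = s 1 * v 0) (h2 : s 0 * v 2 = s 2 * v 0)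
    (h3 : s 1 * v 2 = s 2 * v 1) : ∃ c : ℝ, v = c • s := by
  have hss : s 0 ^ 2 + s 1 ^ 2 + s 2 ^ 2 > 0 := by
    rcases Function.ne_iff.mp hs with ⟨k, hk⟩
    fin_cases k <;> simp at hk <;> positivity
  refine ⟨(v 0 * s 0 + v 1 * s 1 + v 2 * s 2) / (s 0 ^ 2 + s 1 ^ 2 + s 2 ^ 2), ?_⟩
  funext k
  fin_cases k <;> simp [Pi.smul_apply] <;> field_simp
  · linear_combination (-(s 1)) * h1 + (-(s 2)) * h2
  · linear_combination s 0 * h1 + (-(s 2)) * h3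
  · linear_combination s 0 * h2 + s 1 * h3

lemma smul_one_add_comm {n : Type*} [Fintype n] [DecidableEq n]
    (α β : ℂ) (Q R : Matrix n n ℂ)
    (h : (α • (1 : Matrix n n ℂ) + Q) * (β • 1 + R) = (β • (1 : Matrix n n ℂ) + R) * (α • 1 + Q)) :
    Q * R = R * Q := by
  have e : ∀ (γ δ : ℂ) (X Y : Matrix n n ℂ),
      (γ • (1 : Matrix n n ℂ) + X) * (δ • 1 + Y)
        = (γ * δ) • (1 : Matrix n n ℂ) + δ • X + γ • Y + X * Y := by
    intro γ δ X Y
    simp only [add_mul, mul_add, Matrix.smul_mul, Matrix.mul_smul, one_mul, mul_one, smul_smul]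
    rw [mul_comm δ γ]
    abel
  rw [e, e, mul_comm β α, add_right_comm ((α * β) • (1 : Matrix n n ℂ)) (α • R) (β • Q)] at h
  exact add_left_cancel h

lemma pauliDot_zero : pauliDot 0 = 0 := by
  rw [pauliDot_eq]; ext i j; fin_cases i <;> fin_cases j <;> simp


/-- a pairwise commuting family of Hermitian 2×2 matrices has the
common structural form `P i = F i • I + G i • (s·σ)` for a single vector `s ∈ ℝ³`. -/
theorem commuting_hermitian_family_structure {ι : Type*}
    (P : ι → Matrix (Fin 2) (Fin 2) ℂ)
    (hHerm : ∀ i, (P i).conjTranspose = P i)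
    (hComm : ∀ i j, P i * P j = P j * P i) :
    ∃ (s : Fin 3 → ℝ) (F G : ι → ℝ), ∀ i,
      P i = (F i : ℂ) • (1 : Matrix (Fin 2) (Fin 2) ℂ) + (G i : ℂ) • pauliDot s := by
  classical
  set a : ι → ℝ := fun i => ((P i 0 0).re + (P i 1 1).re) / 2 with ha
  set v : ι → Fin 3 → ℝ := fun i =>
    ![(P i 1 0).re, (P i 1 0).im, ((P i 0 0).re - (P i 1 1).re) / 2] with hv
  have hdec : ∀ i, P i = ((a i : ℝ) : ℂ) • (1 : Matrix (Fin 2) (Fin 2) ℂ) + pauliDot (v i) :=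
    fun i => herm_decomp (P i) (hHerm i)
  have hQ : ∀ i j, pauliDot (v i) * pauliDot (v j) = pauliDot (v j) * pauliDot (v i) := by
    intro i j
    have h := hComm i j
    rw [hdec i, hdec j] at h
    exact smul_one_add_comm _ _ _ _ h
  by_cases hall : ∀ i, v i = 0
  · refine ⟨0, a, fun _ => 0, fun i => ?_⟩
    rw [hdec i, hall i, pauliDot_zero]
    simp
  · push_neg at hall
    obtain ⟨i0, h0⟩ := hall
    choose c hc using fun i =>
      parallel_of_cross (v i0) (v i) h0
        (comm_cross (v i0) (v i) (hQ i0 i)).1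
        (comm_cross (v i0) (v i) (hQ i0 i)).2.1
        (comm_cross (v i0) (v i) (hQ i0 i)).2.2
    exact ⟨v i0, a, c, fun i => by rw [hdec i, hc i, pauliDot_smul]⟩
end

section
/- Let c ∈ ℝ, c ≠ 0, and let α, β, γ : ℝ → ℝ be differentiable functions satisfying for all t ∈ ℝ: γ'(t)·cos α(t) + β'(t)·sin α(t)·sin γ(t) = 0, γ'(t)·sin α(t) − β'(t)·cos α(t)·sin γ(t) = 0, and α'(t) + β'(t)·cos γ(t) = −c. Then γ' ≡ 0 (so γ is constant), β'(t)·sin γ(t) = 0 for all t; moreover, if sin γ(0) ≠ 0, then β is constant and α(t) = α(0) − c·t for all t ∈ ℝ. -/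
open Real

/-- solution of the Euler-angle equations `e·H = (0,0,c)` for a
constant magnetic field directed along the third axis: `γ' ≡ 0`,
`β'·sin γ ≡ 0`, and if `sin γ(0) ≠ 0` then `β` is constant and
`α(t) = α(0) - c·t`. -/
theorem euler_angles_constant_field
    (c : ℝ) (hc : c ≠ 0) (α β γ : ℝ → ℝ)
    (hα : Differentiable ℝ α) (hβ : Differentiable ℝ β) (hγ : Differentiable ℝ γ)
    (h1 : ∀ t, deriv γ t * cos (α t) + deriv β t * sin (α t) * sin (γ t) = 0)
    (h2 : ∀ t, deriv γ t * sin (α t) - deriv β t * cos (α t) * sin (γ t) = 0)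
    (h3 : ∀ t, deriv α t + deriv β t * cos (γ t) = -c) :
    (∀ t, deriv γ t = 0)
    ∧ (∀ t, deriv β t * sin (γ t) = 0)
    ∧ (sin (γ 0) ≠ 0 →
        (∀ t, β t = β 0) ∧ ∀ t, α t = α 0 - c * t) := by
  have hγ' : ∀ t, deriv γ t = 0 := by
    intro t
    have e1 := h1 t
    have e2 := h2 t
    have hp := sin_sq_add_cos_sq (α t)
    linear_combination cos (α t) * e1 + sin (α t) * e2 - deriv γ t * hp
  have hβs : ∀ t, deriv β t * sin (γ t) = 0 := by
    intro t
    have e1 := h1 t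
    have e2 := h2 t
    have hp := sin_sq_add_cos_sq (α t)
    linear_combination sin (α t) * e1 - cos (α t) * e2 - deriv β t * sin (γ t) * hp
  refine ⟨hγ', hβs, fun hs0 => ?_⟩
  have hγc : ∀ t, γ t = γ 0 := fun t =>
    is_const_of_deriv_eq_zero hγ hγ' t 0
  have hβ' : ∀ t, deriv β t = 0 := by
    intro t
    have := hβs t
    rw [hγc t] at this
    exact (mul_eq_zero.1 this).resolve_right hs0
  have hβc : ∀ t, β t = β 0 := fun t => is_const_of_deriv_eq_zero hβ hβ' t 0
  refine ⟨hβc, ?_⟩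
  have hα' : ∀ t, deriv α t = -c := by
    intro t
    have := h3 t
    rw [hβ' t] at this; linarith
  have hf : Differentiable ℝ (fun t => α t + c * t) := by
    exact hα.add ((differentiable_id.const_mul c))
  have hf' : ∀ t, deriv (fun t => α t + c * t) t = 0 := by
    intro t
    have hd : HasDerivAt (fun t => α t + c * t) (deriv α t + c * 1) t :=
      ((hα t).hasDerivAt).add ((hasDerivAt_id t).const_mul c)
    rw [hd.deriv, hα' t]; ring
  intro t
  have := is_const_of_deriv_eq_zero hf hf' t 0
  simp at this
  linarith
end

section
/- Let k ∈ ℝ, k ≠ 0, let ε ∈ {1, −1} and C₁ ∈ ℝ with C₁² + ε/k² ≥ 0. Define u(t) = √(C₁² + ε/k²)·sin(2·√(2/3)·k·t) + C₁, and let J ⊆ ℝ be an open interval on which u > 0; set l(t) = √(u(t)) for t ∈ J. Then l satisfies on J the ordinary differential equation k² + (3/2)·l''(t)/l(t) = −ε/l(t)⁴. In particular, for ε = −1 (respectively ε = +1) the function l² = √(C₁² ∓ 1/k²)·sin(2√(2/3)·k·t) + C₁ solves k² + (3/2)·l̈/l = c/l⁴ with c = ±1. Moreover, the function l(t) = C₁·sin(√(2/3)·k·t)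 satisfies k² + (3/2)·l''(t)/l(t) = 0 at every t where l(t) ≠ 0. -/
/-!
For `u = A sin(ωt) + C` and `l = √u` one has `l''/l = (2uu'' - u'²)/(4u²)`, and since
`u'' = -ω²(u - C)` and `u'² = ω²(A² - (u - C)²)` this equals `ω²(C² - A² - u²)/(4u²)`.
With `ω² = 8k²/3` and `A² = C² + ε/k²` this gives `(3/2) l''/l = -k² - ε/u² = -k² - ε/l⁴`.
For `l = C sin(√(2/3) k t)` simply `l'' = -(2/3) k² l`.
-/

open Real Filter Topology

section Sinusoid

variable (A ω t : ℝ)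

theorem hasDerivAt_mul_sin_mul :
    HasDerivAt (fun s => A * sin (ω * s)) (A * ω * cos (ω * t)) t :=
  ((((hasDerivAt_id' t).const_mul ω).sin).const_mul A).congr_deriv (by ring)

theorem hasDerivAt_mul_cos_mul :
    HasDerivAt (fun s => A * cos (ω * s)) (-(A * ω * sin (ω * t))) t :=
  ((((hasDerivAt_id' t).const_mul ω).cos).const_mul A).congr_deriv (by ring)

theorem deriv_deriv_mul_sin_mul :
    deriv (deriv fun s => A * sin (ω * s)) t = -(ω ^ 2 * (A * sin (ω * t))) := by
  have hderiv : deriv (fun s => A * sin (ω * s)) = fun s => A * ω * cos (ω * s) :=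
    funext fun s => (hasDerivAt_mul_sin_mul A ω s).deriv
  rw [hderiv, (hasDerivAt_mul_cos_mul (A * ω) ω t).deriv]
  ring

end Sinusoid

theorem deriv_deriv_sqrt_comp {u u' : ℝ → ℝ} {u'' t : ℝ}
    (hu : ∀ᶠ s in 𝓝 t, HasDerivAt u (u' s) s) (hu' : HasDerivAt u' u'' t) (ht : 0 < u t) :
    deriv (deriv fun s => √(u s)) t = (2 * u t * u'' - u' t ^ 2) / (4 * u t * √(u t)) := by
  have hpos : ∀ᶠ s in 𝓝 t, 0 < u s :=
    hu.self_of_nhds.continuousAt.eventually (lt_mem_nhds ht)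
  have hderiv : deriv (fun s => √(u s)) =ᶠ[𝓝 t] fun s => u' s / (2 * √(u s)) := by
    filter_upwards [hu, hpos] with s hus hs
    exact (hus.sqrt hs.ne').deriv
  have hsqrt : 0 < √(u t) := sqrt_pos.mpr ht
  have hquot : HasDerivAt (fun s => u' s / (2 * √(u s)))
      ((u'' * (2 * √(u t)) - u' t * (2 * (u' t / (2 * √(u t))))) / (2 * √(u t)) ^ 2) t :=
    hu'.div ((hu.self_of_nhds.sqrt ht.ne').const_mul 2) (by positivity)
  rw [hderiv.deriv_eq, hquot.deriv]
  have hsq : √(u t) ^ 2 = u t := sq_sqrt ht.le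
  field_simp
  rw [hsq]
  ring

theorem deriv_deriv_sqrt_sinusoid_div {A ω C t : ℝ} (ht : 0 < A * sin (ω * t) + C) :
    deriv (deriv fun s => √(A * sin (ω * s) + C)) t / √(A * sin (ω * t) + C)
      = ω ^ 2 * (C ^ 2 - A ^ 2 - (A * sin (ω * t) + C) ^ 2)
          / (4 * (A * sin (ω * t) + C) ^ 2) := by
  rw [deriv_deriv_sqrt_comp (.of_forall fun s => (hasDerivAt_mul_sin_mul A ω s).add_const C)
    (hasDerivAt_mul_cos_mul (A * ω) ω t) ht]
  rw [div_div, mul_assoc (4 * _), mul_self_sqrt ht.le]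
  field_simp
  linear_combination (-ω ^ 2 * A ^ 2) * sin_sq_add_cos_sq (ω * t)

theorem dilatation_factor_ode_general
    (k : ℝ) (hk : k ≠ 0) (ε : ℝ)
    (C₁ : ℝ) (hC : C₁ ^ 2 + ε / k ^ 2 ≥ 0) (a b : ℝ)
    (hpos : ∀ t ∈ Set.Ioo a b,
      Real.sqrt (C₁ ^ 2 + ε / k ^ 2) * Real.sin (2 * Real.sqrt (2 / 3) * k * t)
        + C₁ > 0) :
    (∀ t ∈ Set.Ioo a b,
      k ^ 2
        + (3 / 2) *
          deriv (deriv (fun s =>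
            Real.sqrt (Real.sqrt (C₁ ^ 2 + ε / k ^ 2)
              * Real.sin (2 * Real.sqrt (2 / 3) * k * s) + C₁))) t
          / Real.sqrt (Real.sqrt (C₁ ^ 2 + ε / k ^ 2)
              * Real.sin (2 * Real.sqrt (2 / 3) * k * t) + C₁)
      = -ε / (Real.sqrt (Real.sqrt (C₁ ^ 2 + ε / k ^ 2)
              * Real.sin (2 * Real.sqrt (2 / 3) * k * t) + C₁)) ^ 4)
    ∧ ∀ (C : ℝ) (t : ℝ), C * Real.sin (Real.sqrt (2 / 3) * k * t) ≠ 0 →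
        k ^ 2
          + (3 / 2) *
            deriv (deriv (fun s => C * Real.sin (Real.sqrt (2 / 3) * k * s))) t
            / (C * Real.sin (Real.sqrt (2 / 3) * k * t)) = 0 := by
  have hsqrt23 : √(2 / 3 : ℝ) ^ 2 = 2 / 3 := sq_sqrt (by norm_num)
  refine ⟨fun t ht => ?_, fun C t hl => ?_⟩
  · have hu := hpos t ht
    rw [mul_div_assoc, deriv_deriv_sqrt_sinusoid_div hu]
    set u := √(C₁ ^ 2 + ε / k ^ 2) * sin (2 * √(2 / 3) * k * t) + C₁
    have hpow : √u ^ 4 = u ^ 2 := by rw [show 4 = 2 * 2 by rfl, pow_mul, sq_sqrt hu.le]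
    rw [hpow, mul_pow, mul_pow, hsqrt23, sq_sqrt hC]
    field_simp
    ring
  · rw [mul_div_assoc, deriv_deriv_mul_sin_mul, neg_div, mul_div_assoc, div_self hl]
    linear_combination (-3 / 2 * k ^ 2) * hsqrt23

/-- the dilatation factor `l = √u` with
`u(t) = √(C₁² + ε/k²)·sin(2√(2/3)·k·t) + C₁` solves
`k² + (3/2)·l''/l = -ε/l⁴` on any open interval where `u > 0`; moreover
`l(t) = C₁·sin(√(2/3)·k·t)` solves `k² + (3/2)·l''/l = 0` wherever `l ≠ 0`. -/
theorem dilatation_factor_ode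
    (k : ℝ) (hk : k ≠ 0) (ε : ℝ) (hε : ε = 1 ∨ ε = -1)
    (C₁ : ℝ) (hC : C₁ ^ 2 + ε / k ^ 2 ≥ 0) (a b : ℝ)
    (hpos : ∀ t ∈ Set.Ioo a b,
      Real.sqrt (C₁ ^ 2 + ε / k ^ 2) * Real.sin (2 * Real.sqrt (2 / 3) * k * t)
        + C₁ > 0) :
    (∀ t ∈ Set.Ioo a b,
      k ^ 2
        + (3 / 2) *
          deriv (deriv (fun s =>
            Real.sqrt (Real.sqrt (C₁ ^ 2 + ε / k ^ 2)
              * Real.sin (2 * Real.sqrt (2 / 3) * k * s) + C₁))) t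
          / Real.sqrt (Real.sqrt (C₁ ^ 2 + ε / k ^ 2)
              * Real.sin (2 * Real.sqrt (2 / 3) * k * t) + C₁)
      = -ε / (Real.sqrt (Real.sqrt (C₁ ^ 2 + ε / k ^ 2)
              * Real.sin (2 * Real.sqrt (2 / 3) * k * t) + C₁)) ^ 4)
    ∧ ∀ (C : ℝ) (t : ℝ), C * Real.sin (Real.sqrt (2 / 3) * k * t) ≠ 0 →
        k ^ 2
          + (3 / 2) *
            deriv (deriv (fun s => C * Real.sin (Real.sqrt (2 / 3) * k * s))) t
            / (C * Real.sin (Real.sqrt (2 / 3) * k * t)) = 0 :=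
  dilatation_factor_ode_general k hk ε C₁ hC a b hpos
end
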